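/- arXiv:2601.14794 — 2 statements merged into one kernel-verified Lean document; each statement's English description precedes it below -/
import Mathlib

section
/- Let w ∈ ℝ^d be a random vector distributed as a multivariate Gaussian N(0, Σ_w) with covariance Σ_w, and let b be uniformly distributed on [0, 2π) independent of w. Then for any fixed y_i, y_j ∈ ℝ^d, E[2 cos(w^⊤ y_i + b) cos(w^⊤ y_j + b)] = exp(−(1/2)(y_i − y_j)^⊤ Σ_w (y_i − y_j)). -/
open Matrix MeasureTheory ProbabilityTheory

/-- The quadratic form `u ↦ u^⊤ S u`. -/
noncomputable def quadForm {d : ℕ} (S : Matrix (Fin d) (Fin d) ℝ) (u : Fin d → ℝ) : ℝ :=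
  ∑ i, ∑ j, u i * S i j * u j

/-- A probability measure on `ℝ^d` is a centered Gaussian with covariance `S` iff every
linear functional `w ↦ u^⊤ w` pushes it forward to the one-dimensional Gaussian
`N(0, u^⊤ S u)`.  -/
def IsCenteredGaussian {d : ℕ} (μ : Measure (Fin d → ℝ))
    (S : Matrix (Fin d) (Fin d) ℝ) : Prop :=
  IsProbabilityMeasure μ ∧
    ∀ u : Fin d → ℝ,
      μ.map (fun w => ∑ i, u i * w i) = gaussianReal 0 (Real.toNNReal (quadForm S u))

/-!
Write `2 cos(w·yᵢ + b) cos(w·yⱼ + b) = cos(w·(yᵢ - yⱼ)) + cos(w·(yᵢ + yⱼ) + 2b)`. The second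
term integrates to zero against the uniform phase `b` for every fixed `w`, so by Fubini only
`E cos(w·(yᵢ - yⱼ))` remains. Since `w·(yᵢ - yⱼ) ~ N(0, (yᵢ - yⱼ)ᵀ Σ (yᵢ - yⱼ))`, this is the
real part of a Gaussian characteristic function at `t = 1`.
-/

open scoped Real NNReal ENNReal

theorem integral_cos_mul_gaussianReal (m : ℝ) (v : ℝ≥0) (t : ℝ) :
    ∫ x, Real.cos (t * x) ∂gaussianReal m v = Real.cos (t * m) * Real.exp (-(v * t ^ 2 / 2)) := by
  have h := congrArg Complex.re (charFun_gaussianReal (μ := m) (v := v) t)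
  have hint : Integrable (fun x : ℝ => Complex.exp (t * x * Complex.I)) (gaussianReal m v) :=
    (integrable_const (1 : ℝ)).mono' (by fun_prop) (ae_of_all _ fun x => by
      rw [← Complex.ofReal_mul, Complex.norm_exp_ofReal_mul_I])
  rw [charFun_apply_real, ← RCLike.re_to_complex, ← integral_re hint] at h
  have hexp : ((t * m : ℝ) : ℂ) * Complex.I - v * t ^ 2 / 2
      = ((-(v * t ^ 2 / 2) : ℝ) : ℂ) + ((t * m : ℝ) : ℂ) * Complex.I := by
    push_cast; ring
  simp only [RCLike.re_to_complex, ← Complex.ofReal_mul, Complex.exp_ofReal_mul_I_re] at h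
  rw [h, hexp, Complex.exp_add, ← Complex.ofReal_exp, Complex.re_ofReal_mul,
    Complex.exp_ofReal_mul_I_re, mul_comm]

theorem integral_cos_add_nat_mul (a : ℝ) {n : ℕ} (hn : n ≠ 0) :
    ∫ b in 0..2 * π, Real.cos (a + n * b) = 0 := by
  have hn' : (n : ℝ) ≠ 0 := Nat.cast_ne_zero.mpr hn
  simp_rw [add_comm a]
  rw [intervalIntegral.integral_comp_mul_add Real.cos hn', integral_cos, mul_zero, zero_add,
    add_comm _ a, Real.sin_add_nat_mul_two_pi, sub_self, smul_zero]

noncomputable def uniformPhase : Measure ℝ :=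
  (ENNReal.ofReal (2 * π))⁻¹ • volume.restrict (Set.Ico 0 (2 * π))

instance isProbabilityMeasure_uniformPhase : IsProbabilityMeasure uniformPhase := by
  constructor
  rw [uniformPhase, Measure.smul_apply, Measure.restrict_apply_univ, Real.volume_Ico, sub_zero,
    smul_eq_mul, ENNReal.inv_mul_cancel (by simp [Real.pi_pos]) ENNReal.ofReal_ne_top]

theorem integral_cos_add_nat_mul_uniformPhase (a : ℝ) {n : ℕ} (hn : n ≠ 0) :
    ∫ b, Real.cos (a + n * b) ∂uniformPhase = 0 := by
  rw [uniformPhase, integral_smul_measure, integral_Ico_eq_integral_Ioo,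
    ← integral_Ioc_eq_integral_Ioo, ← intervalIntegral.integral_of_le (by positivity),
    integral_cos_add_nat_mul a hn, smul_zero]

theorem integral_two_mul_cos_mul_cos_add_phase {E : Type*} [MeasurableSpace E]
    (μ : Measure E) [IsFiniteMeasure μ] (ν : Measure ℝ) [IsProbabilityMeasure ν]
    (hν : ∀ a, ∫ b, Real.cos (a + 2 * b) ∂ν = 0) {f g : E → ℝ}
    (hf : Measurable f) (hg : Measurable g) :
    ∫ p : E × ℝ, 2 * Real.cos (f p.1 + p.2) * Real.cos (g p.1 + p.2) ∂μ.prod ν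
      = ∫ w, Real.cos (f w - g w) ∂μ := by
  have hbounded {F : E × ℝ → ℝ} (hF : Measurable F) :
      Integrable (fun p => Real.cos (F p)) (μ.prod ν) :=
    (integrable_const (1 : ℝ)).mono' (by fun_prop)
      (ae_of_all _ fun p => (Real.norm_eq_abs _).trans_le (Real.abs_cos_le_one _))
  have hsum (p : E × ℝ) : 2 * Real.cos (f p.1 + p.2) * Real.cos (g p.1 + p.2)
      = Real.cos (f p.1 - g p.1) + Real.cos (f p.1 + g p.1 + 2 * p.2) := by
    rw [Real.two_mul_cos_mul_cos]; ring_nf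
  simp_rw [hsum]
  rw [integral_add (hbounded (by fun_prop)) (hbounded (by fun_prop)),
    integral_prod _ (hbounded (by fun_prop)), integral_prod _ (hbounded (by fun_prop))]
  simp [hν]

theorem quadForm_eq_dotProduct_mulVec {d : ℕ} (S : Matrix (Fin d) (Fin d) ℝ) (u : Fin d → ℝ) :
    quadForm S u = u ⬝ᵥ S *ᵥ u := by
  simp [quadForm, dotProduct, mulVec, Finset.mul_sum, mul_assoc]

theorem integral_cos_of_isCenteredGaussian {d : ℕ} {S : Matrix (Fin d) (Fin d) ℝ}
    (hS : S.PosSemidef) {μ : Measure (Fin d → ℝ)} (hμ : IsCenteredGaussian μ S)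
    (u : Fin d → ℝ) :
    ∫ w, Real.cos (∑ i, u i * w i) ∂μ = Real.exp (-(1 / 2) * quadForm S u) := by
  have hq : 0 ≤ quadForm S u := by
    rw [quadForm_eq_dotProduct_mulVec]; exact hS.dotProduct_mulVec_nonneg u
  calc ∫ w, Real.cos (∑ i, u i * w i) ∂μ
      = ∫ x, Real.cos (1 * x) ∂μ.map (fun w => ∑ i, u i * w i) := by
        rw [integral_map (Finset.measurable_sum _ fun i _ => by fun_prop).aemeasurable
          (by fun_prop)]
        simp_rw [one_mul]
    _ = Real.exp (-(1 / 2) * quadForm S u) := by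
        rw [hμ.2 u, integral_cos_mul_gaussianReal, Real.coe_toNNReal _ hq, mul_zero,
          Real.cos_zero, one_mul]
        ring_nf

/-- For `w ~ N(0, Σ_w)` and `b ~ Uniform[0, 2π)` independent, and fixed `y_i, y_j ∈ ℝ^d`:
`E[2 cos(w^⊤ y_i + b) cos(w^⊤ y_j + b)] = exp(−(1/2)(y_i − y_j)^⊤ Σ_w (y_i − y_j))`. -/
theorem stmt3 {d : ℕ} (Sw : Matrix (Fin d) (Fin d) ℝ) (hS : Sw.PosDef)
    (μ : Measure (Fin d → ℝ)) (hμ : IsCenteredGaussian μ Sw)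
    (yi yj : Fin d → ℝ) :
    ∫ p : (Fin d → ℝ) × ℝ,
        2 * Real.cos ((∑ i, p.1 i * yi i) + p.2) * Real.cos ((∑ i, p.1 i * yj i) + p.2)
        ∂(μ.prod ((ENNReal.ofReal (2 * Real.pi))⁻¹ •
            (volume.restrict (Set.Ico (0 : ℝ) (2 * Real.pi))))) =
      Real.exp (-(1 / 2) * quadForm Sw (yi - yj)) := by
  have : IsProbabilityMeasure μ := hμ.1
  have hlin (y : Fin d → ℝ) : Measurable fun w : Fin d → ℝ => ∑ i, w i * y i :=
    Finset.measurable_sum _ fun i _ => by fun_prop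
  have hphase (a : ℝ) : ∫ b, Real.cos (a + 2 * b) ∂uniformPhase = 0 := by
    exact_mod_cast integral_cos_add_nat_mul_uniformPhase a two_ne_zero
  calc _ = ∫ w, Real.cos (∑ i, w i * yi i - ∑ i, w i * yj i) ∂μ :=
        integral_two_mul_cos_mul_cos_add_phase μ uniformPhase hphase (hlin yi) (hlin yj)
    _ = ∫ w, Real.cos (∑ i, (yi - yj) i * w i) ∂μ := by
        simp_rw [← Finset.sum_sub_distrib, Pi.sub_apply, sub_mul, mul_comm]
    _ = _ := integral_cos_of_isCenteredGaussian hS.posSemidef hμ _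
end

section
/- Let Φ = U_r Σ_r V_r^⊤ (economy SVD, r = rank(Φ)) with the all-ones vector 1_n ∈ range(Φ), and let X ∈ ℝ^{M×n} satisfy 1_M^⊤ X = 1_n^⊤. For λ > 0 define A = V_r(Σ_r² + λ I_r)^{-1} Σ_r U_r^⊤ ( X^⊤ − (1/M)[I_n − U_r(I_r + λ Σ_r^{-2}) U_r^⊤] 1_n 1_M^⊤ ). Then Φ A 1_M = 1_n, i.e., the constrained (Lagrange-multiplier) solution exactly preserves the sum-to-one mass constraint. -/
open Matrix

/-- The constrained (Lagrange-multiplier) RANDSMAP solution exactly preserves mass: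
with `Φ = U_r Σ_r V_r^⊤` (economy SVD), `1_n ∈ range(Φ)`, `1_M^⊤ X = 1_n^⊤`, `λ > 0`, and
`A = V_r(Σ_r² + λI_r)⁻¹ Σ_r U_r^⊤ (X^⊤ − (1/M)[I_n − U_r(I_r + λΣ_r⁻²)U_r^⊤] 1_n 1_M^⊤)`,
one has `Φ A 1_M = 1_n`. -/
theorem stmt13 {n p M : ℕ} {r : ℕ}
    (Φ : Matrix (Fin n) (Fin p) ℝ)
    (U : Matrix (Fin n) (Fin r) ℝ) (V : Matrix (Fin p) (Fin r) ℝ) (σ : Fin r → ℝ)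
    (hU : Uᵀ * U = 1) (hV : Vᵀ * V = 1) (hσ : ∀ i, 0 < σ i)
    (hΦ : Φ = U * Matrix.diagonal σ * Vᵀ)
    (hones : ∃ x : Fin p → ℝ, Φ *ᵥ x = fun _ => (1 : ℝ))
    (X : Matrix (Fin M) (Fin n) ℝ)
    (hX : (fun _ => (1 : ℝ)) ᵥ* X = fun _ => (1 : ℝ))
    (hM : 0 < M)
    (lam : ℝ) (hlam : 0 < lam) :
    (Φ * (V * (Matrix.diagonal σ * Matrix.diagonal σ +
          lam • (1 : Matrix (Fin r) (Fin r) ℝ))⁻¹ * Matrix.diagonal σ * Uᵀ *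
        (Xᵀ - (M : ℝ)⁻¹ •
          (((1 : Matrix (Fin n) (Fin n) ℝ) -
              U * ((1 : Matrix (Fin r) (Fin r) ℝ) +
                lam • (Matrix.diagonal σ * Matrix.diagonal σ)⁻¹) * Uᵀ) *
            Matrix.of (fun (_ : Fin n) (_ : Fin M) => (1 : ℝ)))))) *ᵥ
      (fun _ => (1 : ℝ)) = fun _ => (1 : ℝ) := by
  obtain ⟨x, hx⟩ := hones
  have hσ0 : ∀ i, σ i ≠ 0 := fun i => (hσ i).ne'
  have hpos : ∀ i, σ i * σ i + lam ≠ 0 :=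
    fun i => (add_pos (mul_pos (hσ i) (hσ i)) hlam).ne'
  set D : Matrix (Fin r) (Fin r) ℝ := Matrix.diagonal σ with hD
  set B : Matrix (Fin r) (Fin r) ℝ := D * D + lam • 1 with hBdef
  set C : Matrix (Fin r) (Fin r) ℝ := 1 + lam • (D * D)⁻¹ with hCdef
  set J : Matrix (Fin n) (Fin M) ℝ := Matrix.of (fun _ _ => (1 : ℝ)) with hJ
  set E : Matrix (Fin n) (Fin n) ℝ := (1 : Matrix (Fin n) (Fin n) ℝ) - U * C * Uᵀ with hE
  -- diagonal computations
  have hBdiag : B = Matrix.diagonal (fun i => σ i * σ i + lam) := by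
    rw [hBdef, hD, Matrix.diagonal_mul_diagonal]
    ext i j
    rcases eq_or_ne i j with h | h <;>
      simp [Matrix.diagonal_apply, Matrix.one_apply, h]
  have hBinv : B⁻¹ = Matrix.diagonal (fun i => (σ i * σ i + lam)⁻¹) := by
    apply Matrix.inv_eq_right_inv
    rw [hBdiag, Matrix.diagonal_mul_diagonal, ← Matrix.diagonal_one]
    exact congrArg Matrix.diagonal (funext fun i => mul_inv_cancel₀ (hpos i))
  have hDDinv : (D * D)⁻¹ = Matrix.diagonal (fun i => (σ i * σ i)⁻¹) := by
    apply Matrix.inv_eq_right_inv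
    rw [hD, Matrix.diagonal_mul_diagonal, Matrix.diagonal_mul_diagonal,
      ← Matrix.diagonal_one]
    exact congrArg Matrix.diagonal
      (funext fun i => mul_inv_cancel₀ (mul_ne_zero (hσ0 i) (hσ0 i)))
  have hCdiag : C = Matrix.diagonal (fun i => 1 + lam * (σ i * σ i)⁻¹) := by
    rw [hCdef, hDDinv]
    ext i j
    rcases eq_or_ne i j with h | h <;>
      simp [Matrix.diagonal_apply, Matrix.one_apply, h]
  have hmid : D * (B⁻¹ * (D * C)) = 1 := by
    rw [hBinv, hCdiag, hD]
    simp only [Matrix.diagonal_mul_diagonal]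
    rw [← Matrix.diagonal_one]
    refine congrArg Matrix.diagonal (funext fun i => ?_)
    have h1 := hpos i
    have h2 := hσ0 i
    field_simp
  -- cancellation helpers
  have hUU : ∀ {k : ℕ} (Z : Matrix (Fin r) (Fin k) ℝ), Uᵀ * (U * Z) = Z := by
    intro k Z; rw [← Matrix.mul_assoc, hU, Matrix.one_mul]
  have hVV : ∀ {k : ℕ} (Z : Matrix (Fin r) (Fin k) ℝ), Vᵀ * (V * Z) = Z := by
    intro k Z; rw [← Matrix.mul_assoc, hV, Matrix.one_mul]
  -- key matrix identity
  have key : Φ * (V * B⁻¹ * D * Uᵀ) * (U * C * Uᵀ) = U * Uᵀ := by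
    rw [hΦ]
    simp only [Matrix.mul_assoc]
    rw [hVV, hUU,
      show D * (B⁻¹ * (D * (C * Uᵀ))) = D * (B⁻¹ * (D * C)) * Uᵀ by
        simp only [Matrix.mul_assoc],
      hmid, Matrix.one_mul]
  -- U Uᵀ fixes the ones vector
  have hfix : (U * Uᵀ) *ᵥ (fun _ => (1 : ℝ)) = fun _ => (1 : ℝ) := by
    rw [← hx, Matrix.mulVec_mulVec, hΦ]
    simp only [Matrix.mul_assoc]
    rw [hUU]
  -- the inner vector
  have hXv : Xᵀ *ᵥ (fun _ => (1 : ℝ)) = fun _ => (1 : ℝ) := by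
    rw [Matrix.mulVec_transpose]; exact hX
  have hJv : J *ᵥ (fun _ => (1 : ℝ)) = fun _ => (M : ℝ) := by
    funext i
    rw [hJ]
    simp [Matrix.mulVec, dotProduct]
  have hinner : (Xᵀ - (M : ℝ)⁻¹ • (E * J)) *ᵥ (fun _ => (1 : ℝ)) =
      (U * C * Uᵀ) *ᵥ (fun _ => (1 : ℝ)) := by
    rw [Matrix.sub_mulVec, hXv, Matrix.smul_mulVec, ← Matrix.mulVec_mulVec, hJv]
    have hconst : ((M : ℝ)⁻¹ • (E *ᵥ fun _ => (M : ℝ))) = E *ᵥ (fun _ => (1 : ℝ)) := by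
      have hv : ((M : ℝ)⁻¹ • fun _ : Fin n => (M : ℝ)) = (fun _ : Fin n => (1 : ℝ)) :=
        funext fun i => by
          show (M : ℝ)⁻¹ * (M : ℝ) = 1
          field_simp
      rw [← Matrix.mulVec_smul, hv]
    rw [hconst, hE, Matrix.sub_mulVec, Matrix.one_mulVec]
    exact sub_sub_cancel _ _
  -- put everything together
  calc (Φ * (V * B⁻¹ * D * Uᵀ * (Xᵀ - (M : ℝ)⁻¹ • (E * J)))) *ᵥ (fun _ => (1 : ℝ))
      = (Φ * (V * B⁻¹ * D * Uᵀ)) *ᵥ ((Xᵀ - (M : ℝ)⁻¹ • (E * J)) *ᵥ (fun _ => (1 : ℝ))) := by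
        simp only [Matrix.mulVec_mulVec, ← Matrix.mul_assoc]
    _ = (Φ * (V * B⁻¹ * D * Uᵀ) * (U * C * Uᵀ)) *ᵥ (fun _ => (1 : ℝ)) := by
        rw [hinner, Matrix.mulVec_mulVec]
    _ = (U * Uᵀ) *ᵥ (fun _ => (1 : ℝ)) := by rw [key]
    _ = fun _ => (1 : ℝ) := hfix
end
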